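/- Let g ∈ A_k have Garside normal form g = g₁⋯g_m·Δ^δ with δ ≤ −m. Then |g|_S = Σᵢ (k − |gᵢ|_S) + k(|δ| − m), where |·|_S is the word length with respect to S = {a,b,a⁻¹,b⁻¹}. -/

import Mathlib

/-- The alternating word `xyxy⋯` with `n` letters in the free group on `Bool`. -/
def altWord : Bool → ℕ → FreeGroup Bool
  | _, 0 => 1
  | x, n + 1 => FreeGroup.of x * altWord (!x) n

/-- The Artin relation `prod(a,b;k) = prod(b,a;k)`. -/
def artinRel (k : ℕ) : Set (FreeGroup Bool) := {altWord false k * (altWord true k)⁻¹}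

/-- The Artin group of dihedral type `A_k = ⟨a, b ∣ prod(a,b;k) = prod(b,a;k)⟩`. -/
def Ak (k : ℕ) : Type := PresentedGroup (artinRel k)

instance (k : ℕ) : Group (Ak k) := inferInstanceAs (Group (PresentedGroup (artinRel k)))

/-- The generator `a` of `A_k`. -/
def aA (k : ℕ) : Ak k := PresentedGroup.of false

/-- The generator `b` of `A_k`. -/
def bA (k : ℕ) : Ak k := PresentedGroup.of true

/-- `altProd x y n = prod(x,y;n) = xyxy⋯` with `n` factors. -/
def altProd {G : Type*} [Monoid G] : G → G → ℕ → G
  | _, _, 0 => 1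
  | x, y, n + 1 => x * altProd y x n

/-- The Garside element `Δ = prod(a,b;k)` of `A_k`. -/
def ΔA (k : ℕ) : Ak k := altProd (aA k) (bA k) k
/-- The set `S = {a, b, a⁻¹, b⁻¹}` of Artin generators of `A_k`. -/
def Sset (k : ℕ) : Set (Ak k) := {aA k, bA k, (aA k)⁻¹, (bA k)⁻¹}

/-- Word length on `A_k` with respect to `S = {a, b, a⁻¹, b⁻¹}`. -/
noncomputable def lenS (k : ℕ) (g : Ak k) : ℕ :=
  sInf {n | ∃ L : List (Ak k), (∀ x ∈ L, x ∈ Sset k) ∧ L.length = n ∧ L.prod = g}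

/-- The set `T = {prod(a,b;i), prod(b,a;i) : 1 ≤ i ≤ k-1}`. -/
def TsetA (k : ℕ) : Set (Ak k) :=
  {g | ∃ i, 1 ≤ i ∧ i ≤ k - 1 ∧
    (g = altProd (aA k) (bA k) i ∨ g = altProd (bA k) (aA k) i)}

namespace GarsideAux

/-- The generator of `Ak k` indexed by a Bool. -/
def gA (k : ℕ) (x : Bool) : Ak k := PresentedGroup.of x

/-- flip a Bool `m` times -/
def nx : ℕ → Bool → Bool
  | 0, x => x
  | n + 1, x => !(nx n x)

lemma nx_not (m : ℕ) (x : Bool) : nx m (!x) = !(nx m x) := by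
  induction m with
  | zero => rfl
  | succ n ih => simp [nx, ih]

lemma nx_nx (m : ℕ) (x : Bool) : nx m (nx m x) = x := by
  induction m with
  | zero => rfl
  | succ n ih => simp [nx, nx_not, ih]

/-- Alternating list of generators in `Ak k`. -/
def genL (k : ℕ) : Bool → ℕ → List (Ak k)
  | _, 0 => []
  | x, n + 1 => gA k x :: genL k (!x) n

lemma genL_length (k : ℕ) (x : Bool) (n : ℕ) : (genL k x n).length = n := by
  induction n generalizing x with
  | zero => rfl
  | succ n ih => simp [genL, ih]

lemma genL_prod (k : ℕ) (x : Bool) (n : ℕ) :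
    (genL k x n).prod
      = altProd (gA k x) (gA k (!x)) n := by
  induction n generalizing x with
  | zero => rfl
  | succ n ih =>
    simp only [genL, List.prod_cons, altProd, ih (!x), Bool.not_not]

lemma genL_append (k : ℕ) (x : Bool) (m n : ℕ) :
    genL k x (m + n) = genL k x m ++ genL k (nx m x) n := by
  induction m generalizing x with
  | zero => rw [Nat.zero_add]; rfl
  | succ m ih =>
    have h : m + 1 + n = (m + n) + 1 := by omega
    rw [h]
    simp only [genL, ih (!x), nx, nx_not, List.cons_append]

lemma genL_mem (k : ℕ) (x : Bool) (n : ℕ) :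
    ∀ g ∈ genL k x n, ∃ y : Bool, g = gA k y := by
  induction n generalizing x with
  | zero => intro g hg; simp [genL] at hg
  | succ n ih =>
    intro g hg
    rcases List.mem_cons.mp hg with h | h
    · exact ⟨x, h⟩
    · exact ih (!x) g h

/-- The quotient map as a monoid hom. -/
def π (k : ℕ) : FreeGroup Bool →* Ak k :=
  QuotientGroup.mk' (Subgroup.normalClosure (artinRel k))

lemma π_altWord (k : ℕ) (x : Bool) (n : ℕ) :
    π k (altWord x n) = (genL k x n).prod := by
  induction n generalizing x with
  | zero => simp [altWord, genL]
  | succ n ih =>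
    simp only [altWord, map_mul, genL, List.prod_cons, ih (!x)]
    rfl

lemma delta_rel (k : ℕ) : ((genL k false k).prod : Ak k) = (genL k true k).prod := by
  have h : π k (altWord false k * (altWord true k)⁻¹) = 1 := by
    apply (QuotientGroup.eq_one_iff _).mpr
    exact Subgroup.subset_normalClosure rfl
  rw [map_mul, map_inv, π_altWord, π_altWord, mul_inv_eq_one] at h
  exact h

lemma Delta_eq (k : ℕ) (x : Bool) : (genL k x k).prod = ΔA k := by
  cases x
  · rw [ΔA, genL_prod]; rfl
  · rw [← delta_rel, ΔA, genL_prod]; rfl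

lemma of_mul_Delta (k : ℕ) (x : Bool) :
    gA k x * ΔA k = ΔA k * gA k (nx k x) := by
  have h1 : (genL k x (k + 1)).prod = gA k x * ΔA k := by
    rw [show genL k x (k+1) = gA k x :: genL k (!x) k from rfl,
      List.prod_cons, Delta_eq]
  have h2 : (genL k x (k + 1)).prod = ΔA k * gA k (nx k x) := by
    rw [genL_append k x k 1, List.prod_append, Delta_eq]
    simp [genL]
  rw [← h1, h2]

lemma conj_of (k : ℕ) (y : Bool) :
    (MulAut.conj (ΔA k)) (gA k y) = gA k (nx k y) := by
  have := of_mul_Delta k (nx k y)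
  rw [nx_nx] at this
  rw [MulAut.conj_apply, ← this]
  group

lemma conj_genL (k : ℕ) (x : Bool) (n : ℕ) :
    (MulAut.conj (ΔA k)) ((genL k x n).prod) = (genL k (nx k x) n).prod := by
  induction n generalizing x with
  | zero => simp [genL]
  | succ n ih =>
    simp only [genL, List.prod_cons, map_mul, conj_of, ih (!x), nx_not]

lemma mem_T_iff (k : ℕ) (x : Ak k) :
    x ∈ TsetA k ↔ ∃ (b : Bool) (i : ℕ), 1 ≤ i ∧ i ≤ k - 1 ∧ x = (genL k b i).prod := by
  constructor
  · rintro ⟨i, h1, h2, h3 | h3⟩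
    · exact ⟨false, i, h1, h2, by rw [genL_prod]; exact h3⟩
    · exact ⟨true, i, h1, h2, by rw [genL_prod]; exact h3⟩
  · rintro ⟨b, i, h1, h2, h3⟩
    cases b
    · exact ⟨i, h1, h2, Or.inl (by rw [genL_prod] at h3; exact h3)⟩
    · exact ⟨i, h1, h2, Or.inr (by rw [genL_prod] at h3; exact h3)⟩

lemma conj_mem_T (k : ℕ) (x : Ak k) (hx : x ∈ TsetA k) :
    (MulAut.conj (ΔA k)) x ∈ TsetA k := by
  rw [mem_T_iff] at hx ⊢
  obtain ⟨b, i, h1, h2, h3⟩ := hx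
  exact ⟨nx k b, i, h1, h2, by rw [h3, conj_genL]⟩

/-- exponent sum target map -/
def φf : Bool → Multiplicative ℤ := fun _ => Multiplicative.ofAdd 1

lemma lift_altWord (x : Bool) (n : ℕ) :
    FreeGroup.lift φf (altWord x n) = Multiplicative.ofAdd (n : ℤ) := by
  induction n generalizing x with
  | zero => simp [altWord]
  | succ n ih =>
    rw [altWord, map_mul, ih (!x), FreeGroup.lift_apply_of]
    rw [φf, ← ofAdd_add]
    push_cast
    ring_nf

lemma hrels (k : ℕ) : ∀ r ∈ artinRel k, FreeGroup.lift φf r = 1 := by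
  intro r hr
  rw [artinRel, Set.mem_singleton_iff] at hr
  subst hr
  rw [map_mul, map_inv, lift_altWord, lift_altWord, mul_inv_eq_one]

/-- The exponent-sum homomorphism. -/
def φA (k : ℕ) : Ak k →* Multiplicative ℤ := PresentedGroup.toGroup (hrels k)

/-- Exponent sum. -/
def eZ (k : ℕ) (g : Ak k) : ℤ := Multiplicative.toAdd (φA k g)

lemma eZ_mul (k : ℕ) (g h : Ak k) : eZ k (g * h) = eZ k g + eZ k h := by
  simp [eZ, map_mul]

lemma eZ_inv (k : ℕ) (g : Ak k) : eZ k g⁻¹ = - eZ k g := by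
  simp [eZ, map_inv]

lemma eZ_gA (k : ℕ) (x : Bool) : eZ k (gA k x) = 1 := by
  have : φA k (gA k x) = φf x := PresentedGroup.toGroup.of (hrels k)
  simp [eZ, this, φf]

lemma eZ_genL (k : ℕ) (x : Bool) (n : ℕ) : eZ k ((genL k x n).prod) = n := by
  induction n generalizing x with
  | zero => simp [genL, eZ]
  | succ n ih =>
    rw [genL, List.prod_cons, eZ_mul, eZ_gA, ih (!x)]
    push_cast; ring

lemma eZ_Delta (k : ℕ) : eZ k (ΔA k) = k := by
  rw [← Delta_eq k false, eZ_genL]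

lemma eZ_Delta_zpow (k : ℕ) (d : ℤ) : eZ k (ΔA k ^ d) = k * d := by
  rw [eZ, map_zpow, toAdd_zpow]
  have : Multiplicative.toAdd (φA k (ΔA k)) = (k : ℤ) := eZ_Delta k
  rw [this, smul_eq_mul]
  ring

/-- negative word predicate -/
def isNW (k : ℕ) (N : List (Ak k)) : Prop := ∀ x ∈ N, ∃ y : Bool, x = (gA k y)⁻¹

lemma gA_mem_S (k : ℕ) (y : Bool) : gA k y ∈ Sset k := by
  cases y
  · exact Or.inl rfl
  · exact Or.inr (Or.inl rfl)

lemma isNW_sub_S (k : ℕ) (N : List (Ak k)) (h : isNW k N) : ∀ x ∈ N, x ∈ Sset k := by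
  intro x hx
  obtain ⟨y, hy⟩ := h x hx
  subst hy
  cases y
  · exact Or.inr (Or.inr (Or.inl rfl))
  · exact Or.inr (Or.inr (Or.inr rfl))

lemma eZ_isNW (k : ℕ) (N : List (Ak k)) (h : isNW k N) :
    eZ k N.prod = -(N.length : ℤ) := by
  induction N with
  | nil => simp [eZ]
  | cons x N ih =>
    obtain ⟨y, hy⟩ := h x (List.mem_cons_self)
    rw [List.prod_cons, eZ_mul, hy, eZ_inv, eZ_gA,
      ih (fun z hz => h z (List.mem_cons_of_mem x hz))]
    rw [List.length_cons]
    push_cast; ring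

lemma isNW_append (k : ℕ) {N M : List (Ak k)} (hN : isNW k N) (hM : isNW k M) :
    isNW k (N ++ M) := by
  intro x hx
  rcases List.mem_append.mp hx with h | h
  · exact hN x h
  · exact hM x h

/-- the inverse of a positive alternating word, as a negative word -/
lemma NW_genL_inv (k : ℕ) (x : Bool) (n : ℕ) :
    ∃ N : List (Ak k), isNW k N ∧ N.prod = ((genL k x n).prod)⁻¹ ∧ N.length = n := by
  refine ⟨((genL k x n).map (fun g => g⁻¹)).reverse, ?_, ?_, ?_⟩
  · intro z hz
    rw [List.mem_reverse, List.mem_map] at hz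
    obtain ⟨g, hg, hgz⟩ := hz
    obtain ⟨y, hy⟩ := genL_mem k x n g hg
    exact ⟨y, by rw [← hgz, hy]⟩
  · rw [← List.prod_inv_reverse]
  · rw [List.length_reverse, List.length_map, genL_length]

lemma NW_delta_inv_pow (k : ℕ) (n : ℕ) :
    ∃ N : List (Ak k), isNW k N ∧ N.prod = ((ΔA k)⁻¹) ^ n := by
  induction n with
  | zero => exact ⟨[], fun x hx => absurd hx List.not_mem_nil, by simp⟩
  | succ n ih =>
    obtain ⟨N, hNW, hprod⟩ := ih
    obtain ⟨M, hMW, hMprod, _⟩ := NW_genL_inv k false k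
    refine ⟨N ++ M, isNW_append k hNW hMW, ?_⟩
    rw [List.prod_append, hprod, hMprod, Delta_eq, pow_succ]
lemma neg_rep (k : ℕ) : ∀ (n : ℕ) (L : List (Ak k)), L.length = n →
    (∀ x ∈ L, x ∈ TsetA k) → ∀ δ : ℤ, δ ≤ -(n : ℤ) →
    ∃ N : List (Ak k), isNW k N ∧ N.prod = L.prod * ΔA k ^ δ := by
  intro n
  induction n with
  | zero =>
    intro L hlen hT δ hδ
    rw [List.length_eq_zero_iff] at hlen; subst hlen
    obtain ⟨N, hNW, hprod⟩ := NW_delta_inv_pow k ((-δ).toNat)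
    refine ⟨N, hNW, ?_⟩
    rw [hprod, List.prod_nil, one_mul]
    have : ΔA k ^ δ = ((ΔA k)⁻¹) ^ ((-δ).toNat) := by
      rw [← zpow_natCast ((ΔA k)⁻¹), inv_zpow, ← zpow_neg]
      congr 1
      omega
    rw [this]
  | succ n ih =>
    intro L hlen hT δ hδ
    cases L with
    | nil => simp at hlen
    | cons h0 L' =>
      have hT0 := hT h0 (List.mem_cons_self)
      rw [mem_T_iff] at hT0
      obtain ⟨b, i, hi1, hi2, hb⟩ := hT0
      have hsplit : genL k b k = genL k b i ++ genL k (nx i b) (k - i) := by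
        have hik : i + (k - i) = k := by omega
        have h := genL_append k b i (k - i)
        rw [hik] at h
        exact h
      have hDelta : ΔA k = h0 * (genL k (nx i b) (k - i)).prod := by
        rw [hb, ← List.prod_append, ← hsplit, Delta_eq]
      have hh0 : h0 = ΔA k * ((genL k (nx i b) (k - i)).prod)⁻¹ := by
        rw [hDelta]; group
      have hlen' : L'.length = n := by
        simpa using hlen
      have hlen'' : (L'.map (MulAut.conj (ΔA k) : Ak k → Ak k)).length = n := by
        rw [List.length_map]; exact hlen'
      have hT'' : ∀ x ∈ L'.map (MulAut.conj (ΔA k) : Ak k → Ak k), x ∈ TsetA k := by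
        intro x hx
        rw [List.mem_map] at hx
        obtain ⟨z, hz, hzx⟩ := hx
        rw [← hzx]
        exact conj_mem_T k z (hT z (List.mem_cons_of_mem h0 hz))
      have hδ'' : δ + 1 ≤ -(n : ℤ) := by
        push_cast at hδ; omega
      obtain ⟨N1, hN1W, hN1prod⟩ :=
        ih (L'.map (MulAut.conj (ΔA k) : Ak k → Ak k)) hlen'' hT'' (δ + 1) hδ''
      obtain ⟨N0, hN0W, hN0prod, hN0len⟩ := NW_genL_inv k (nx k (nx i b)) (k - i)
      refine ⟨N0 ++ N1, isNW_append k hN0W hN1W, ?_⟩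
      rw [List.prod_append, hN0prod, hN1prod]
      have hce : (genL k (nx k (nx i b)) (k - i)).prod
          = (MulAut.conj (ΔA k)) ((genL k (nx i b) (k - i)).prod) :=
        (conj_genL k (nx i b) (k - i)).symm
      have hcL : (L'.map (MulAut.conj (ΔA k) : Ak k → Ak k)).prod
          = (MulAut.conj (ΔA k)) L'.prod :=
        (map_list_prod (MulAut.conj (ΔA k) : Ak k ≃* Ak k) L').symm
      rw [hce, hcL, List.prod_cons, hh0, MulAut.conj_apply, MulAut.conj_apply]
      group

lemma S_word_bound (k : ℕ) : ∀ L : List (Ak k), (∀ x ∈ L, x ∈ Sset k) →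
    (eZ k L.prod).natAbs ≤ L.length := by
  intro L
  induction L with
  | nil => intro _; simp [eZ]
  | cons x L ih =>
    intro h
    have hx := h x (List.mem_cons_self)
    have h1 : (eZ k x).natAbs = 1 := by
      rcases hx with h | h | h | h
      · rw [h]; have : eZ k (aA k) = 1 := eZ_gA k false; rw [this]; rfl
      · rw [h]; have : eZ k (bA k) = 1 := eZ_gA k true; rw [this]; rfl
      · rw [h, eZ_inv]; have : eZ k (aA k) = 1 := eZ_gA k false; rw [this]; rfl
      · rw [h, eZ_inv]; have : eZ k (bA k) = 1 := eZ_gA k true; rw [this]; rfl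
    have h2 := ih (fun z hz => h z (List.mem_cons_of_mem x hz))
    rw [List.prod_cons, List.length_cons]
    calc (eZ k (x * L.prod)).natAbs = (eZ k x + eZ k L.prod).natAbs := by rw [eZ_mul]
      _ ≤ (eZ k x).natAbs + (eZ k L.prod).natAbs := Int.natAbs_add_le _ _
      _ ≤ L.length + 1 := by omega

lemma lenS_le (k : ℕ) (g : Ak k) (L : List (Ak k)) (hS : ∀ x ∈ L, x ∈ Sset k)
    (hp : L.prod = g) : lenS k g ≤ L.length :=
  Nat.sInf_le ⟨L, hS, rfl, hp⟩

lemma lenS_eq (k : ℕ) (g : Ak k) (L : List (Ak k)) (hS : ∀ x ∈ L, x ∈ Sset k)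
    (hp : L.prod = g) (hlen : L.length = (eZ k g).natAbs) : lenS k g = L.length := by
  refine le_antisymm (lenS_le k g L hS hp) ?_
  have hne : {n | ∃ L0 : List (Ak k),
      (∀ x ∈ L0, x ∈ Sset k) ∧ L0.length = n ∧ L0.prod = g}.Nonempty :=
    ⟨L.length, L, hS, rfl, hp⟩
  obtain ⟨L0, hS0, hl0, hp0⟩ := Nat.sInf_mem hne
  have := S_word_bound k L0 hS0
  rw [hp0] at this
  rw [hlen]
  calc (eZ k g).natAbs ≤ L0.length := this
    _ = lenS k g := hl0

lemma lenS_T (k : ℕ) (x : Ak k) (hx : x ∈ TsetA k) :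
    ((lenS k x : ℤ) = eZ k x) ∧ lenS k x ≤ k := by
  rw [mem_T_iff] at hx
  obtain ⟨b, i, h1, h2, h3⟩ := hx
  have he : eZ k x = i := by rw [h3, eZ_genL]
  have hS : ∀ z ∈ genL k b i, z ∈ Sset k := by
    intro z hz
    obtain ⟨y, hy⟩ := genL_mem k b i z hz
    rw [hy]; exact gA_mem_S k y
  have hlen : (genL k b i).length = (eZ k x).natAbs := by
    rw [he, genL_length]; rfl
  have := lenS_eq k x (genL k b i) hS h3.symm hlen
  rw [genL_length] at this
  constructor
  · rw [this, he]
  · omega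

lemma sum_lemma (k : ℕ) : ∀ L : List (Ak k), (∀ x ∈ L, x ∈ TsetA k) →
    ((L.map (fun x => k - lenS k x)).sum : ℤ) = k * L.length - eZ k L.prod := by
  intro L
  induction L with
  | nil => intro _; simp [eZ]
  | cons x L ih =>
    intro h
    obtain ⟨hxe, hxk⟩ := lenS_T k x (h x (List.mem_cons_self))
    have ih' := ih (fun z hz => h z (List.mem_cons_of_mem x hz))
    rw [List.map_cons, List.sum_cons, List.prod_cons, eZ_mul, List.length_cons]
    push_cast [Nat.cast_sub hxk, ih']
    linarith [hxe]
end GarsideAux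

open GarsideAux in
/-- If `g = g₁⋯g_m·Δ^δ` is the Garside normal form of `g ∈ A_k` (so `m` is minimal)
and `δ ≤ −m`, then `|g|_S = Σᵢ (k − |gᵢ|_S) + k(|δ| − m)`. -/
theorem length_of_garside_very_negative (k : ℕ) (hk : 3 ≤ k) (g : Ak k)
    (L : List (Ak k)) (δ : ℤ)
    (hT : ∀ x ∈ L, x ∈ TsetA k)
    (hg : g = L.prod * ΔA k ^ δ)
    (hmin : ∀ (L' : List (Ak k)) (δ' : ℤ), (∀ x ∈ L', x ∈ TsetA k) →
      g = L'.prod * ΔA k ^ δ' → L.length ≤ L'.length)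
    (hδ : δ ≤ -(L.length : ℤ)) :
    lenS k g = (L.map (fun x => k - lenS k x)).sum + k * (δ.natAbs - L.length) := by
  obtain ⟨N, hNW, hNprod⟩ := neg_rep k L.length L rfl hT δ hδ
  have hNg : N.prod = g := by rw [hNprod, hg]
  have heg : eZ k g = -(N.length : ℤ) := by
    rw [← hNg]; exact eZ_isNW k N hNW
  have hlen : lenS k g = N.length := by
    refine lenS_eq k g N (isNW_sub_S k N hNW) hNg ?_
    rw [heg, Int.natAbs_neg, Int.natAbs_natCast]
  have hsum := sum_lemma k L hT
  have heg2 : eZ k g = eZ k L.prod + k * δ := by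
    rw [hg, eZ_mul, eZ_Delta_zpow]
  have h1 : L.length ≤ δ.natAbs := by omega
  set A : ℕ := (L.map (fun x => k - lenS k x)).sum with hA
  have key : (N.length : ℤ) = (A : ℤ) + (k : ℤ) * ((δ.natAbs : ℤ) - (L.length : ℤ)) := by
    rw [hA, hsum]
    have hna : (δ.natAbs : ℤ) = -δ := by omega
    rw [hna]
    linear_combination heg - heg2
  rw [hlen]
  have : ((N.length : ℕ) : ℤ) = ((A + k * (δ.natAbs - L.length) : ℕ) : ℤ) := by
    push_cast [Nat.cast_sub h1]
    rw [key, Int.abs_eq_natAbs]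
  exact_mod_cast this
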